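/- Let α satisfy φ < α ≤ 2, where φ = (1 + √5)/2 is the golden ratio, and let A, B, a, b be positive integers such that (α − 1)·B ≤ A. Then A·c_α·log₂ a + B·(1 + c_α·log₂ b) + A + B ≤ (A + B)·(1 + c_α·log₂(a + b)). -/

import Mathlib

/-!
Writing `M = α log α − (α−1) log(α−1)` and `D = (α+1) log(α+1) − α log α` (natural logarithms),
one has `c_α = (α+1) log 2 / D`, and after cancelling the terms `A + B` the claim becomes
`B log 2 ≤ c_α (A log((a+b)/a) + B log((a+b)/b))`.
Since `A ≥ (α−1) B`, the right-hand side is at least `c_α B ((α−1) log((a+b)/a) + log((a+b)/b))`,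
and by Gibbs' inequality the bracket is at least its minimum over the split of `a + b`, which is `M`.
Gibbs' inequality also gives `D ≤ (α+1) log 2`, while `M ≥ log 2` for `3/2 ≤ α ≤ 5/2`;
hence `c_α M ≥ log 2`.
-/

open Real

/-- The constant `c_α = (α+1)/((α+1)·log₂(α+1) − α·log₂ α)`. -/
noncomputable def cA (α : ℝ) : ℝ :=
  (α + 1) / ((α + 1) * logb 2 (α + 1) - α * logb 2 α)

lemma mul_log_le_mul_log_add_sub {u p : ℝ} (hu : 0 < u) (hp : 0 < p) :
    u * log p ≤ u * log u + p - u := by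
  have h := mul_le_mul_of_nonneg_left (log_le_sub_one_of_pos (div_pos hp hu)) hu.le
  rw [log_div hp.ne' hu.ne', mul_sub_one, mul_div_cancel₀ _ hu.ne'] at h
  linarith

/-- Gibbs' inequality for two-point distributions, with unnormalised weights. -/
lemma mul_log_div_add_mul_log_div_le {u v x y : ℝ} (hu : 0 < u) (hv : 0 < v) (hx : 0 < x)
    (hy : 0 < y) :
    u * log (x / (x + y)) + v * log (y / (x + y))
      ≤ u * log u + v * log v - (u + v) * log (u + v) := by
  have hs : 0 < u + v := by positivity
  have ht : 0 < x + y := by positivity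
  have hpx := mul_log_le_mul_log_add_sub hu (by positivity : 0 < (u + v) * (x / (x + y)))
  have hpy := mul_log_le_mul_log_add_sub hv (by positivity : 0 < (u + v) * (y / (x + y)))
  rw [log_mul hs.ne' (by positivity)] at hpx hpy
  have hsum : (u + v) * (x / (x + y)) + (u + v) * (y / (x + y)) = u + v := by
    field_simp
  linarith

lemma mul_log_add_one_sub_mul_log_le {α : ℝ} (hα : 0 < α) :
    (α + 1) * log (α + 1) - α * log α ≤ (α + 1) * log 2 := by
  have h := mul_log_div_add_mul_log_div_le hα one_pos one_pos one_pos
  rw [log_one, mul_zero, add_zero, show (1 : ℝ) / (1 + 1) = 2⁻¹ by norm_num, log_inv] at h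
  linarith

lemma log_two_le_mul_log_sub_mul_log_sub_one {α : ℝ} (h₁ : 3 / 2 ≤ α) (h₂ : α ≤ 5 / 2) :
    log 2 ≤ α * log α - (α - 1) * log (α - 1) := by
  have hlogα : 1 - α⁻¹ ≤ log α := one_sub_inv_le_log_of_pos (by linarith)
  have hlogα' : log (α - 1) ≤ α - 2 := by linarith [log_le_sub_one_of_pos (by linarith : 0 < α - 1)]
  have hα : α * (1 - α⁻¹) = α - 1 := by field_simp
  nlinarith [log_two_lt_d9, mul_le_mul_of_nonneg_left hlogα (by linarith : 0 ≤ α),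
    mul_le_mul_of_nonneg_left hlogα' (by linarith : 0 ≤ α - 1)]

lemma cA_eq (α : ℝ) : cA α = (α + 1) * log 2 / ((α + 1) * log (α + 1) - α * log α) := by
  rw [cA, logb, logb, ← div_div_eq_mul_div]
  congr 1
  ring

lemma mul_log_add_one_sub_mul_log_pos {α : ℝ} (hα : 0 < α) :
    0 < (α + 1) * log (α + 1) - α * log α := by
  have hlog : log α < log (α + 1) := log_lt_log hα (by linarith)
  have hlog' : 0 < log (α + 1) := log_pos (by linarith)
  nlinarith

lemma cA_pos {α : ℝ} (hα : 0 < α) : 0 < cA α := by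
  rw [cA_eq]
  exact div_pos (by positivity) (mul_log_add_one_sub_mul_log_pos hα)

lemma log_two_le_cA_mul {α : ℝ} (h₁ : 3 / 2 ≤ α) (h₂ : α ≤ 5 / 2) :
    log 2 ≤ cA α * (α * log α - (α - 1) * log (α - 1)) := by
  have hM := log_two_le_mul_log_sub_mul_log_sub_one h₁ h₂
  have hD := mul_log_add_one_sub_mul_log_le (by linarith : 0 < α)
  rw [cA_eq, div_mul_eq_mul_div, le_div_iff₀ (mul_log_add_one_sub_mul_log_pos (by linarith))]
  have hlog2 : 0 < log 2 := log_pos one_lt_two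
  calc log 2 * ((α + 1) * log (α + 1) - α * log α)
      ≤ log 2 * ((α + 1) * log 2) := by gcongr
    _ ≤ (α + 1) * log 2 * (α * log α - (α - 1) * log (α - 1)) := by
      nlinarith [mul_le_mul_of_nonneg_left hM (by positivity : 0 ≤ (α + 1) * log 2)]

lemma mul_log_sub_mul_log_le {α A B a b : ℝ} (hα : 1 < α) (hB : 0 ≤ B) (ha : 0 < a)
    (hb : 0 < b) (hAB : (α - 1) * B ≤ A) :
    B * (α * log α - (α - 1) * log (α - 1))
      ≤ A * (log (a + b) - log a) + B * (log (a + b) - log b) := by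
  have hgibbs := mul_log_div_add_mul_log_div_le (sub_pos.mpr hα) one_pos ha hb
  rw [log_one, mul_zero, add_zero, sub_add_cancel, one_mul, log_div ha.ne' (by positivity),
    log_div hb.ne' (by positivity)] at hgibbs
  have hloga : log a ≤ log (a + b) := log_le_log ha (by linarith)
  nlinarith [mul_le_mul_of_nonneg_left hgibbs hB,
    mul_le_mul_of_nonneg_right hAB (sub_nonneg.mpr hloga)]

theorem alphamerge_B (α : ℝ) (hφ : (1 + Real.sqrt 5) / 2 < α) (hα2 : α ≤ 2)
    (A B a b : ℕ) (ha : 0 < a) (hb : 0 < b)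
    (h1 : (α - 1) * B ≤ (A : ℝ)) :
    (A : ℝ) * cA α * logb 2 a + (B : ℝ) * (1 + cA α * logb 2 b) + A + B
      ≤ ((A : ℝ) + B) * (1 + cA α * logb 2 ((a : ℝ) + b)) := by
  have hα : 3 / 2 ≤ α := by
    have : 2 < √5 := (lt_sqrt (by norm_num)).mpr (by norm_num)
    linarith
  have hentropy := mul_log_sub_mul_log_le (by linarith) (Nat.cast_nonneg B)
    (Nat.cast_pos.mpr ha) (Nat.cast_pos.mpr hb) h1
  have key : B * log 2 ≤ cA α * (A * (log (a + b) - log a) + B * (log (a + b) - log b)) :=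
    calc (B : ℝ) * log 2 ≤ B * (cA α * (α * log α - (α - 1) * log (α - 1))) :=
        mul_le_mul_of_nonneg_left (log_two_le_cA_mul hα (by linarith)) (Nat.cast_nonneg B)
      _ = cA α * (B * (α * log α - (α - 1) * log (α - 1))) := by ring
      _ ≤ _ := mul_le_mul_of_nonneg_left hentropy (cA_pos (by linarith)).le
  have hlog2 : 0 < log 2 := log_pos one_lt_two
  rw [← sub_nonneg]
  refine (div_nonneg (sub_nonneg.mpr key) hlog2.le).trans_eq ?_
  simp only [logb]
  field_simp
  ring
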